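/- arXiv:1510.08130 — 5 statements merged into one kernel-verified Lean document; each statement's English description precedes it below -/
import Mathlib

section
/- For the Cauchy kernel k_w(z) = 1/(1 - conj(w)·z) on the unit disk and a point ζ in the open unit disk, the local Dirichlet integral D_ζ(k_w) := (1/2π) ∫_{|λ|=1} |(k_w(λ) - k_w(ζ))/(λ - ζ)|² |dλ| equals |w|² / (|1 - conj(w)·ζ|² · (1 - |w|²)). -/
/-!
The difference quotient of `k(z) = (1 - a z)⁻¹` with `a = conj w` factors as
`a · k(λ) · k(ζ)`, so `D_ζ(k_w) = |w|² |k(ζ)|² · (1/2π) ∫ |k(λ)|² |dλ|`, and the remaining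
integral is `‖k_w‖²_{H²} = 1/(1 - |w|²)`. The latter is computed by the Cauchy integral formula:
on the unit circle `|k(λ)|² dθ = -i (λ - conj a)⁻¹ k(λ) dλ`, and evaluating `k` at `conj a`
gives `1/(1 - |a|²)`.
-/

open Complex Metric Real

lemma one_sub_mul_ne_zero_of_norm_lt_one {a z : ℂ} (ha : ‖a‖ < 1) (hz : ‖z‖ ≤ 1) :
    1 - a * z ≠ 0 := by
  refine sub_ne_zero.mpr fun h => ?_
  have : ‖a * z‖ < 1 := by
    rw [norm_mul]
    exact lt_of_le_of_lt (mul_le_of_le_one_right (norm_nonneg a) hz) ha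
  rw [← h, norm_one] at this
  exact lt_irrefl 1 this

lemma sub_inv_one_sub_mul_div_sub {K : Type*} [Field K] {a x y : K} (hx : 1 - a * x ≠ 0)
    (hy : 1 - a * y ≠ 0) (hxy : x - y ≠ 0) :
    ((1 - a * x)⁻¹ - (1 - a * y)⁻¹) / (x - y) = a * ((1 - a * x)⁻¹ * (1 - a * y)⁻¹) := by
  field_simp
  ring

/-- On the unit circle `z - conj a = z · conj (1 - a z)`; when `1 - a z = 0` both sides vanish. -/
lemma ofReal_norm_inv_one_sub_mul_sq {a z : ℂ} (hz : ‖z‖ = 1) :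
    ((‖(1 - a * z)⁻¹‖ ^ 2 : ℝ) : ℂ) = z * ((z - (starRingEnd ℂ) a)⁻¹ * (1 - a * z)⁻¹) := by
  have hz0 : z ≠ 0 := norm_ne_zero_iff.mp (by rw [hz]; exact one_ne_zero)
  have hzz : z * (starRingEnd ℂ) z = 1 := by rw [mul_conj', hz]; simp
  have hfactor : z - (starRingEnd ℂ) a = z * (starRingEnd ℂ) (1 - a * z) := by
    rw [map_sub, map_one, map_mul]
    linear_combination (starRingEnd ℂ) a * hzz
  rw [hfactor, mul_inv, ← mul_assoc, ← mul_assoc, mul_inv_cancel₀ hz0, one_mul, ← map_inv₀,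
    conj_mul']
  push_cast
  rfl

theorem integral_norm_inv_one_sub_mul_circleMap_sq {a : ℂ} (ha : ‖a‖ < 1) :
    ∫ θ in (0 : ℝ)..(2 * π), ‖(1 - a * circleMap 0 1 θ)⁻¹‖ ^ 2 = 2 * π / (1 - ‖a‖ ^ 2) := by
  have hdiff : DiffContOnCl ℂ (fun z => (1 - a * z)⁻¹) (ball (0 : ℂ) 1) := by
    refine DifferentiableOn.diffContOnCl fun z hz => ?_
    rw [closure_ball _ one_ne_zero, mem_closedBall_zero_iff] at hz
    exact ((differentiableAt_const 1).sub (differentiableAt_id.const_mul a)).inv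
      (one_sub_mul_ne_zero_of_norm_lt_one ha hz) |>.differentiableWithinAt
  have hconj : (starRingEnd ℂ) a ∈ ball (0 : ℂ) 1 := by
    rwa [mem_ball_zero_iff, RCLike.norm_conj]
  have hcauchy := hdiff.circleIntegral_sub_inv_smul hconj
  have hintegrand : ∀ θ : ℝ, deriv (circleMap 0 1) θ •
      ((circleMap 0 1 θ - (starRingEnd ℂ) a)⁻¹ • (1 - a * circleMap 0 1 θ)⁻¹) =
      I * ((‖(1 - a * circleMap 0 1 θ)⁻¹‖ ^ 2 : ℝ) : ℂ) := fun θ => by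
    rw [ofReal_norm_inv_one_sub_mul_sq (by simp [norm_circleMap_zero]), deriv_circleMap,
      smul_eq_mul, smul_eq_mul]
    ring
  rw [circleIntegral, intervalIntegral.integral_congr fun θ _ => hintegrand θ,
    intervalIntegral.integral_const_mul, intervalIntegral.integral_ofReal, mul_conj',
    smul_eq_mul] at hcauchy
  have hpos : (1 : ℝ) - ‖a‖ ^ 2 ≠ 0 := by nlinarith [norm_nonneg a]
  have hresult : I * ((2 * π / (1 - ‖a‖ ^ 2) : ℝ) : ℂ) = 2 * π * I * (1 - (‖a‖ : ℂ) ^ 2)⁻¹ := by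
    have : (1 : ℂ) - (‖a‖ : ℂ) ^ 2 ≠ 0 := by exact_mod_cast hpos
    push_cast
    field_simp
  exact_mod_cast mul_left_cancel₀ I_ne_zero (hcauchy.trans hresult.symm)

/-- For the Cauchy kernel `k_w(z) = 1/(1 - conj w · z)` and `ζ ∈ 𝔻`, the local Dirichlet
integral `D_ζ(k_w) = (1/2π) ∫_𝕋 |(k_w(λ) - k_w(ζ))/(λ - ζ)|² |dλ|` equals
`|w|² / (|1 - conj w · ζ|² (1 - |w|²))`. -/
theorem stmt_0 (w ζ : ℂ) (hw : w ∈ ball (0 : ℂ) 1) (hζ : ζ ∈ ball (0 : ℂ) 1) :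
    (1 / (2 * π)) * ∫ θ in (0 : ℝ)..(2 * π),
        ‖((1 - (starRingEnd ℂ) w * circleMap 0 1 θ)⁻¹ - (1 - (starRingEnd ℂ) w * ζ)⁻¹) /
            (circleMap 0 1 θ - ζ)‖ ^ 2
      = ‖w‖ ^ 2 / (‖1 - (starRingEnd ℂ) w * ζ‖ ^ 2 * (1 - ‖w‖ ^ 2)) := by
  rw [mem_ball_zero_iff] at hw hζ
  have ha : ‖(starRingEnd ℂ) w‖ < 1 := by rwa [RCLike.norm_conj]
  have hkζ := one_sub_mul_ne_zero_of_norm_lt_one ha hζ.le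
  have hpointwise : ∀ θ : ℝ,
      ‖((1 - (starRingEnd ℂ) w * circleMap 0 1 θ)⁻¹ - (1 - (starRingEnd ℂ) w * ζ)⁻¹) /
        (circleMap 0 1 θ - ζ)‖ ^ 2 =
      ‖w‖ ^ 2 / ‖1 - (starRingEnd ℂ) w * ζ‖ ^ 2 *
        ‖(1 - (starRingEnd ℂ) w * circleMap 0 1 θ)⁻¹‖ ^ 2 := fun θ => by
    have hunit : ‖circleMap 0 1 θ‖ = 1 := by simp [norm_circleMap_zero]
    have hne : circleMap 0 1 θ - ζ ≠ 0 := sub_ne_zero.mpr fun h => by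
      rw [h] at hunit; exact hζ.ne hunit
    rw [sub_inv_one_sub_mul_div_sub (one_sub_mul_ne_zero_of_norm_lt_one ha hunit.le) hkζ hne]
    simp only [norm_mul, norm_inv, RCLike.norm_conj]
    ring
  rw [intervalIntegral.integral_congr fun θ _ => hpointwise θ,
    intervalIntegral.integral_const_mul, integral_norm_inv_one_sub_mul_circleMap_sq ha,
    RCLike.norm_conj]
  have hw2 : (1 : ℝ) - ‖w‖ ^ 2 ≠ 0 := by nlinarith [norm_nonneg w]
  have hkζ' : ‖1 - (starRingEnd ℂ) w * ζ‖ ≠ 0 := norm_ne_zero_iff.mpr hkζ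
  field_simp
end

section
/- For ζ in the closed unit disk and 0 ≤ r < 1, the function g(λ) = φ_r(λ)/φ(λ), where φ(z) = z/(1 - conj(ζ)·z) and φ_r(z) = φ(rz), satisfies sup_{|λ|<1} |g(λ)| = r(1 + |ζ|)/(1 + r|ζ|), and this quantity is at most 2r/(1+r). -/
open Complex Metric Real
open Filter Topology ComplexConjugate

/-!
With `w = conj ζ · λ`, `g(λ) = r (1 - w)/(1 - r w)` and `|w| ≤ s = |ζ|`. For fixed `|w|` the
inequality `(1 + r s)² |1 - w|² ≤ (1 + s)² |1 - r w|²` is affine in `Re w`, so it reduces to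
`w = -|w|`, where it reads `(1 - r)(|w| - s) ≤ 0`. The bound `r (1 + s)/(1 + r s)` is approached
along `w = -t s`, `t ↑ 1`.
-/

theorem norm_one_sub_mul_le_of_norm_le {r s : ℝ} (hr0 : 0 ≤ r) (hr1 : r ≤ 1) (hs1 : s ≤ 1)
    {w : ℂ} (hw : ‖w‖ ≤ s) :
    ‖1 - w‖ * (1 + r * s) ≤ (1 + s) * ‖1 - (r : ℂ) * w‖ := by
  have ht : 0 ≤ ‖w‖ := norm_nonneg w
  have hs0 : 0 ≤ s := ht.trans hw
  have hre : 0 ≤ ‖w‖ + w.re := by linarith [neg_abs_le w.re, abs_re_le_norm w]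
  have hsq₁ : ‖1 - w‖ ^ 2 = 1 - 2 * w.re + ‖w‖ ^ 2 := by
    simp only [Complex.sq_norm, normSq_sub, normSq_one, one_mul, conj_re]; ring
  have hsq₂ : ‖1 - (r : ℂ) * w‖ ^ 2 = 1 - 2 * r * w.re + r ^ 2 * ‖w‖ ^ 2 := by
    simp only [Complex.sq_norm, normSq_sub, normSq_one, one_mul, conj_re, normSq_mul,
      normSq_ofReal, re_ofReal_mul]; ring
  have h1r : 0 ≤ 1 - r := sub_nonneg.mpr hr1
  -- `(1 + s)²|1 - r w|² - (1 + r s)²|1 - w|²` splits into these two nonnegative terms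
  have h_abs :
      0 ≤ (1 - r) * (s - ‖w‖) * ((1 + s) * (1 + r * ‖w‖) + (1 + r * s) * (1 + ‖w‖)) :=
    mul_nonneg (mul_nonneg h1r (sub_nonneg.mpr hw)) (by positivity)
  have h_re : 0 ≤ 2 * (‖w‖ + w.re) * ((1 - r) * (1 - r * s ^ 2)) := by
    have : r * s ^ 2 ≤ 1 := by nlinarith
    exact mul_nonneg (by positivity) (mul_nonneg h1r (sub_nonneg.mpr this))
  have hrhs : 0 ≤ (1 + s) * ‖1 - (r : ℂ) * w‖ := mul_nonneg (by linarith) (norm_nonneg _)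
  refine (pow_le_pow_iff_left₀ (by positivity) hrhs two_ne_zero).mp ?_
  rw [mul_pow, mul_pow, hsq₁, hsq₂]
  linear_combination h_abs + h_re

/-- The holomorphic extension of `φ_r / φ` to the disk. -/
noncomputable def phiRatio (ζ : ℂ) (r : ℝ) (l : ℂ) : ℂ :=
  r * (1 - conj ζ * l) / (1 - r * conj ζ * l)

theorem norm_phiRatio_le {ζ l : ℂ} {r : ℝ} (hζ : ‖ζ‖ ≤ 1) (hl : ‖l‖ < 1) (hr0 : 0 ≤ r)
    (hr1 : r ≤ 1) : ‖phiRatio ζ r l‖ ≤ r * (1 + ‖ζ‖) / (1 + r * ‖ζ‖) := by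
  have hw : ‖conj ζ * l‖ ≤ ‖ζ‖ := by
    rw [norm_mul, RCLike.norm_conj]
    exact mul_le_of_le_one_right (norm_nonneg ζ) hl.le
  have hrw : ‖(r : ℂ) * (conj ζ * l)‖ < 1 := by
    rw [norm_mul, norm_mul, RCLike.norm_conj, norm_real, norm_of_nonneg hr0]
    calc r * (‖ζ‖ * ‖l‖) ≤ 1 * (1 * ‖l‖) := by gcongr
      _ < 1 := by simpa using hl
  have hden : 0 < ‖1 - (r : ℂ) * (conj ζ * l)‖ :=
    norm_pos_iff.mpr (sub_ne_zero.mpr fun h => by simp [← h] at hrw)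
  have h := norm_one_sub_mul_le_of_norm_le hr0 hr1 hζ hw
  rw [phiRatio, mul_assoc (r : ℂ), norm_div, norm_mul, norm_real, norm_of_nonneg hr0,
    div_le_div_iff₀ hden (by positivity)]
  nlinarith [mul_le_mul_of_nonneg_left h hr0]

-- `ζ / ‖ζ‖` is a junk `0` when `ζ = 0`, and the formula still holds.
theorem phiRatio_neg_mul_div_norm (ζ : ℂ) (r t : ℝ) :
    phiRatio ζ r (-(t * (ζ / ‖ζ‖))) =
      ((r * (1 + t * ‖ζ‖) / (1 + r * t * ‖ζ‖) : ℝ) : ℂ) := by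
  have hconj : conj ζ * (-(t * (ζ / ‖ζ‖))) = -(t * ‖ζ‖ : ℝ) := by
    rw [mul_neg, mul_left_comm, ← mul_div_assoc, conj_mul', sq, ← ofReal_mul, ← ofReal_div,
      mul_self_div_self, ofReal_mul]
  rw [phiRatio, mul_assoc (r : ℂ), hconj]
  push_cast
  ring

theorem sSup_norm_phiRatio_image_ball {ζ : ℂ} {r : ℝ} (hζ : ‖ζ‖ ≤ 1) (hr0 : 0 ≤ r)
    (hr1 : r ≤ 1) :
    sSup ((fun l => ‖phiRatio ζ r l‖) '' ball 0 1) = r * (1 + ‖ζ‖) / (1 + r * ‖ζ‖) := by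
  refine IsLUB.csSup_eq ⟨?_, fun b hb => ?_⟩ ⟨_, 0, mem_ball_self one_pos, rfl⟩
  · rintro _ ⟨l, hl, rfl⟩
    exact norm_phiRatio_le hζ (mem_ball_zero_iff.mp hl) hr0 hr1
  · set f : ℝ → ℝ := fun t => r * (1 + t * ‖ζ‖) / (1 + r * t * ‖ζ‖)
    have hf : Tendsto f (𝓝[<] 1) (𝓝 (r * (1 + ‖ζ‖) / (1 + r * ‖ζ‖))) := by
      have : ContinuousAt f 1 := by
        refine ContinuousAt.div (by fun_prop) (by fun_prop) ?_
        positivity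
      simpa [f] using this.tendsto.mono_left nhdsWithin_le_nhds
    refine le_of_tendsto hf ?_
    filter_upwards [Ioo_mem_nhdsLT one_pos] with t ⟨ht0, ht1⟩
    have hmem : -(t * (ζ / ‖ζ‖)) ∈ ball (0 : ℂ) 1 := by
      rw [mem_ball_zero_iff, norm_neg, norm_mul, norm_real, norm_of_nonneg ht0.le, norm_div,
        norm_real, norm_norm]
      exact (mul_le_of_le_one_right ht0.le (div_self_le_one _)).trans_lt ht1
    have : ‖phiRatio ζ r _‖ ≤ b := hb ⟨_, hmem, rfl⟩
    rwa [phiRatio_neg_mul_div_norm, norm_real, norm_of_nonneg (by positivity)] at this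

theorem mul_one_add_div_le_two_mul_div {r s : ℝ} (hr0 : 0 ≤ r) (hr1 : r ≤ 1) (hs0 : 0 ≤ s)
    (hs1 : s ≤ 1) : r * (1 + s) / (1 + r * s) ≤ 2 * r / (1 + r) := by
  rw [div_le_div_iff₀ (by positivity) (by positivity)]
  nlinarith [mul_nonneg (mul_nonneg hr0 (sub_nonneg.mpr hr1)) (sub_nonneg.mpr hs1)]

/-- For `ζ` in the closed unit disk and `0 ≤ r < 1`, the holomorphic extension
`g(λ) = r(1 - conj ζ · λ)/(1 - r · conj ζ · λ)` of `φ_r/φ`, where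
`φ(z) = z/(1 - conj ζ · z)` and `φ_r(z) = φ(rz)`, satisfies
`sup_{|λ|<1} |g(λ)| = r(1 + |ζ|)/(1 + r|ζ|) ≤ 2r/(1+r)`. -/
theorem stmt_1 (ζ : ℂ) (hζ : ζ ∈ closedBall (0 : ℂ) 1) (r : ℝ) (hr0 : 0 ≤ r) (hr1 : r < 1)
    (g : ℂ → ℂ)
    (hg : ∀ l : ℂ, l ∈ ball (0 : ℂ) 1 →
      g l = (r : ℂ) * (1 - (starRingEnd ℂ) ζ * l) / (1 - (r : ℂ) * (starRingEnd ℂ) ζ * l)) :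
    sSup ((fun l => ‖g l‖) '' ball (0 : ℂ) 1) = r * (1 + ‖ζ‖) / (1 + r * ‖ζ‖) ∧
      r * (1 + ‖ζ‖) / (1 + r * ‖ζ‖) ≤ 2 * r / (1 + r) := by
  have hζ' : ‖ζ‖ ≤ 1 := mem_closedBall_zero_iff.mp hζ
  have hg' : Set.EqOn (fun l => ‖g l‖) (fun l => ‖phiRatio ζ r l‖) (ball 0 1) :=
    fun l hl => congrArg norm (hg l hl)
  refine ⟨?_, mul_one_add_div_le_two_mul_div hr0 hr1.le (norm_nonneg ζ) hζ'⟩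
  rw [hg'.image_eq]
  exact sSup_norm_phiRatio_image_ball hζ' hr0 hr1.le
end

section
/- Let μ be a finite positive Borel measure on the closed unit disk with μ ≠ 0 satisfying the moment relations μ(closure 𝔻)·∫ zⁿ·conj(z)^m dμ(z) = (∫ zⁿ dμ)·(∫ conj(z)^m dμ) for all integers m, n ≥ 0. Then μ = c·δ_ζ for some c > 0 and some ζ in the closed unit disk; moreover ζ = (∫ z dμ)/μ(closure 𝔻). -/
/-!
For `m = n = 1` the moment relation reads `M ∫ |z|² dμ = |∫ z dμ|²` with `M = μ(𝔻̄)`, i.e.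
equality in Cauchy–Schwarz. Equivalently the variance `∫ |z - ζ|² dμ` of `μ` about its
barycentre `ζ = (∫ z dμ) / M` vanishes, so `μ` is concentrated at `ζ`.
-/

open Complex Metric MeasureTheory
open scoped ENNReal ComplexConjugate

theorem Continuous.integrable_of_ae_mem_isCompact {X E : Type*} [TopologicalSpace X] [T2Space X]
    [MeasurableSpace X] [OpensMeasurableSpace X] [NormedAddCommGroup E] {μ : Measure X}
    [IsFiniteMeasure μ] {K : Set X} (hK : IsCompact K) (hμK : ∀ᵐ x ∂μ, x ∈ K) {f : X → E}
    (hf : Continuous f) : Integrable f μ := by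
  rw [← Measure.restrict_eq_self_of_ae_mem hμK]
  exact hf.continuousOn.integrableOn_compact hK

namespace MeasureTheory

theorem Measure.eq_smul_dirac_of_ae_eq {α : Type*} [MeasurableSpace α] {μ : Measure α} {a : α}
    (h : ∀ᵐ x ∂μ, x = a) : μ = μ Set.univ • Measure.dirac a :=
  calc μ = μ.map id := Measure.map_id.symm
    _ = μ.map (fun _ ↦ a) := Measure.map_congr h
    _ = μ Set.univ • Measure.dirac a := Measure.map_const μ a

theorem ae_eq_of_integral_norm_sub_sq_eq_zero {α E : Type*} [MeasurableSpace α]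
    [NormedAddCommGroup E] {μ : Measure α} {f : α → E} {c : E}
    (hf : Integrable (fun x ↦ ‖f x - c‖ ^ 2) μ) (h : ∫ x, ‖f x - c‖ ^ 2 ∂μ = 0) :
    ∀ᵐ x ∂μ, f x = c := by
  filter_upwards [(integral_eq_zero_iff_of_nonneg (fun x ↦ by positivity) hf).mp h] with x hx
  simpa [sub_eq_zero] using hx

/-- The König–Huygens identity for the variance about the barycentre. -/
theorem mul_integral_mul_conj_sub_barycentre {μ : Measure ℂ} [IsFiniteMeasure μ]
    (hM : μ.real Set.univ ≠ 0)
    (h₁ : Integrable (fun z ↦ z) μ) (h₂ : Integrable (fun z ↦ z * conj z) μ) :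
    (μ.real Set.univ : ℂ) * ∫ z, (z - (∫ w, w ∂μ) / μ.real Set.univ) *
        conj (z - (∫ w, w ∂μ) / μ.real Set.univ) ∂μ
      = μ.real Set.univ * ∫ z, z * conj z ∂μ - (∫ z, z ∂μ) * conj (∫ z, z ∂μ) := by
  set M : ℂ := (μ.real Set.univ : ℂ)
  set ζ : ℂ := (∫ w, w ∂μ) / M
  have hM' : M ≠ 0 := ofReal_ne_zero.mpr hM
  have hMconj : conj M = M := conj_ofReal _
  have h₁' : Integrable (fun z ↦ conj z) μ := conjCLE.toContinuousLinearMap.integrable_comp h₁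
  have h₃ : Integrable (fun z ↦ z * conj z - conj ζ * z) μ := h₂.sub (h₁.const_mul _)
  have h₄ : Integrable (fun z ↦ z * conj z - conj ζ * z - ζ * conj z) μ :=
    h₃.sub (h₁'.const_mul _)
  have hexpand : (fun z ↦ (z - ζ) * conj (z - ζ))
      = fun z ↦ z * conj z - conj ζ * z - ζ * conj z + ζ * conj ζ := by
    funext z
    simp only [map_sub]
    ring
  rw [hexpand, integral_add h₄ (integrable_const _), integral_sub h₃ (h₁'.const_mul _),
    integral_sub h₂ (h₁.const_mul _), integral_const_mul, integral_const_mul, integral_const,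
    integral_conj, Complex.real_smul]
  simp only [ζ, map_div₀, hMconj]
  field_simp
  ring

theorem ae_eq_of_integral_mul_conj_sub_eq_zero {μ : Measure ℂ} {ζ : ℂ}
    (hint : Integrable (fun z ↦ ‖z - ζ‖ ^ 2) μ) (h : ∫ z, (z - ζ) * conj (z - ζ) ∂μ = 0) :
    ∀ᵐ z ∂μ, z = ζ := by
  refine ae_eq_of_integral_norm_sub_sq_eq_zero hint ?_
  simp_rw [Complex.mul_conj', ← ofReal_pow] at h
  rwa [integral_complex_ofReal, ofReal_eq_zero] at h

end MeasureTheory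

/-- A nonzero finite positive Borel measure on the closed unit disk satisfying the
moment relations `μ(𝔻̄)·∫ zⁿ conj(z)^m dμ = (∫ zⁿ dμ)(∫ conj(z)^m dμ)` for all
`m, n ≥ 0` is a positive multiple of a Dirac measure `δ_ζ` with
`ζ = (∫ z dμ)/μ(𝔻̄)` in the closed unit disk. -/
theorem stmt_2 (μ : Measure ℂ) [IsFiniteMeasure μ] (hne : μ ≠ 0)
    (hsupp : μ (closedBall (0 : ℂ) 1)ᶜ = 0)
    (hmom : ∀ m n : ℕ,
      ((μ Set.univ).toReal : ℂ) * ∫ z, z ^ n * ((starRingEnd ℂ) z) ^ m ∂μ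
        = (∫ z, z ^ n ∂μ) * ∫ z, ((starRingEnd ℂ) z) ^ m ∂μ) :
    ∃ c : ℝ≥0∞, 0 < c ∧ c ≠ ⊤ ∧ ∃ ζ ∈ closedBall (0 : ℂ) 1,
      μ = c • Measure.dirac ζ ∧ ζ = (∫ z, z ∂μ) / ((μ Set.univ).toReal : ℂ) := by
  have hball : ∀ᵐ z ∂μ, z ∈ closedBall (0 : ℂ) 1 := hsupp
  have hint {E : Type} [NormedAddCommGroup E] {f : ℂ → E} (hf : Continuous f) :
      Integrable f μ :=
    hf.integrable_of_ae_mem_isCompact (isCompact_closedBall 0 1) hball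
  have hM : μ.real Set.univ ≠ 0 :=
    (ENNReal.toReal_pos (Measure.measure_univ_ne_zero.mpr hne) (measure_ne_top μ _)).ne'
  set ζ : ℂ := (∫ z, z ∂μ) / μ.real Set.univ
  have hvar : ∫ z, (z - ζ) * conj (z - ζ) ∂μ = 0 := by
    have h := mul_integral_mul_conj_sub_barycentre hM (hint continuous_id)
      (hint (continuous_id.mul continuous_conj))
    have h11 := hmom 1 1
    simp only [pow_one] at h11
    rw [← measureReal_def, integral_conj] at h11
    rw [h11, sub_self] at h
    exact (mul_eq_zero.mp h).resolve_left (ofReal_ne_zero.mpr hM)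
  have hae : ∀ᵐ z ∂μ, z = ζ := ae_eq_of_integral_mul_conj_sub_eq_zero
    (hint ((continuous_id.sub continuous_const).norm.pow 2)) hvar
  refine ⟨μ Set.univ, Measure.measure_univ_pos.mpr hne, measure_ne_top μ _, ζ, ?_,
    Measure.eq_smul_dirac_of_ae_eq hae, rfl⟩
  have : (ae μ).NeBot := ae_neBot.mpr hne
  obtain ⟨z, rfl, hz⟩ := (hae.and hball).exists
  exact hz
end

section
/- For ζ in the open unit disk, define A = ((2 + |ζ|² + √(4 + |ζ|⁴))/2)^{1/2} and B = ((2 + |ζ|² − √(4 + |ζ|⁴))/2)^{1/2} · conj(ζ)/|ζ| (with B = 0 when ζ = 0). Then the functions b(z) = z/(A − Bz) and a(z) = (1 − conj(ζ)z)/(A − Bz) satisfy |a(λ)|² + |b(λ)|² = 1 for every λ on the unit circle, and b(z)/a(z) = z/(1 − conj(ζ)z). -/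
open Complex Metric Real

open scoped ComplexConjugate

/-! The real numbers `A` and `|B|` are the square roots of the two roots of
`x² - (2 + |ζ|²) x + |ζ|²`, so `|A|² + |B|² = 2 + |ζ|²` and `A |B| = |ζ|`, whence `A B̄ = ζ`.
These two relations are exactly what makes `|A - Bλ|² = |1 - ζ̄λ|² + |λ|²` on the unit circle,
and `|B| < A` keeps `A - Bz` away from `0` on the closed disk. -/

noncomputable def coeffA (r : ℝ) : ℝ := √((2 + r ^ 2 + √(4 + r ^ 4)) / 2)

noncomputable def coeffB (r : ℝ) : ℝ := √((2 + r ^ 2 - √(4 + r ^ 4)) / 2)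

lemma sqrt_four_add_pow_four_le (r : ℝ) : √(4 + r ^ 4) ≤ 2 + r ^ 2 :=
  Real.sqrt_le_iff.mpr ⟨by positivity, by nlinarith [sq_nonneg r]⟩

lemma sq_sqrt_four_add_pow_four (r : ℝ) : √(4 + r ^ 4) ^ 2 = 4 + r ^ 4 :=
  Real.sq_sqrt (by positivity)

lemma coeffA_sq (r : ℝ) : coeffA r ^ 2 = (2 + r ^ 2 + √(4 + r ^ 4)) / 2 :=
  Real.sq_sqrt (by positivity)

lemma coeffB_sq (r : ℝ) : coeffB r ^ 2 = (2 + r ^ 2 - √(4 + r ^ 4)) / 2 :=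
  Real.sq_sqrt (by linarith [sqrt_four_add_pow_four_le r])

lemma coeffA_sq_add_coeffB_sq (r : ℝ) : coeffA r ^ 2 + coeffB r ^ 2 = 2 + r ^ 2 := by
  rw [coeffA_sq, coeffB_sq]; ring

lemma coeffA_mul_coeffB {r : ℝ} (hr : 0 ≤ r) : coeffA r * coeffB r = r := by
  rw [coeffA, coeffB, ← Real.sqrt_mul (by positivity),
    show (2 + r ^ 2 + √(4 + r ^ 4)) / 2 * ((2 + r ^ 2 - √(4 + r ^ 4)) / 2) = r ^ 2 by
      linear_combination (-1 / 4 : ℝ) * sq_sqrt_four_add_pow_four r,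
    Real.sqrt_sq hr]

lemma coeffB_lt_coeffA (r : ℝ) : coeffB r < coeffA r :=
  Real.sqrt_lt_sqrt (by linarith [sqrt_four_add_pow_four_le r])
    (by linarith [Real.sqrt_pos.mpr (show (0 : ℝ) < 4 + r ^ 4 by positivity)])

lemma coeffB_zero : coeffB 0 = 0 := by
  have h := coeffA_mul_coeffB le_rfl
  have hA : 0 < coeffA 0 := (Real.sqrt_nonneg _).trans_lt (coeffB_lt_coeffA 0)
  simpa [hA.ne'] using h

lemma norm_coeffB_mul_conj_div (ζ : ℂ) :
    ‖(coeffB ‖ζ‖ : ℂ) * (conj ζ / ‖ζ‖)‖ = coeffB ‖ζ‖ := by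
  rcases eq_or_ne ζ 0 with rfl | hζ
  · simp [coeffB_zero]
  · rw [norm_mul, norm_div, norm_conj, norm_real, norm_real, norm_norm,
      div_self (norm_ne_zero_iff.mpr hζ), mul_one]
    exact Real.norm_of_nonneg (Real.sqrt_nonneg _)

lemma coeffA_mul_conj_coeffB (ζ : ℂ) :
    (coeffA ‖ζ‖ : ℂ) * conj ((coeffB ‖ζ‖ : ℂ) * (conj ζ / ‖ζ‖)) = ζ := by
  rcases eq_or_ne ζ 0 with rfl | hζ
  · simp
  · have hr : ((‖ζ‖ : ℝ) : ℂ) ≠ 0 := by exact_mod_cast norm_ne_zero_iff.mpr hζ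
    simp only [map_mul, map_div₀, conj_ofReal, conj_conj]
    rw [← mul_assoc, ← ofReal_mul, coeffA_mul_coeffB (norm_nonneg ζ)]
    field_simp

-- Both sides equal `2 + |ζ|² - 2 Re (ζ λ̄)`.
lemma norm_sub_mul_sq_eq {A B ζ l : ℂ} (hAB : A * conj B = ζ)
    (hnorm : ‖A‖ ^ 2 + ‖B‖ ^ 2 = 2 + ‖ζ‖ ^ 2) (hl : ‖l‖ = 1) :
    ‖A - B * l‖ ^ 2 = ‖1 - conj ζ * l‖ ^ 2 + ‖l‖ ^ 2 := by
  have hl' : normSq l = 1 := by rw [← Complex.sq_norm, hl, one_pow]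
  have hcross : (A * conj (B * l)).re = (1 * conj (conj ζ * l)).re := by
    rw [map_mul, ← mul_assoc, hAB]; simp
  simp only [Complex.sq_norm, normSq_sub, normSq_mul, normSq_conj, normSq_one] at hnorm ⊢
  rw [hcross, hl']
  linarith

lemma norm_div_sq_add_norm_div_sq {A B ζ l : ℂ} (hAB : A * conj B = ζ)
    (hnorm : ‖A‖ ^ 2 + ‖B‖ ^ 2 = 2 + ‖ζ‖ ^ 2) (hl : ‖l‖ = 1) :
    ‖(1 - conj ζ * l) / (A - B * l)‖ ^ 2 + ‖l / (A - B * l)‖ ^ 2 = 1 := by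
  have key := norm_sub_mul_sq_eq hAB hnorm hl
  have hpos : 0 < ‖A - B * l‖ ^ 2 := by rw [key, hl]; positivity
  rw [norm_div, norm_div, div_pow, div_pow, ← add_div, ← key, div_self hpos.ne']

lemma sub_mul_ne_zero {A B z : ℂ} (hBA : ‖B‖ < ‖A‖) (hz : ‖z‖ ≤ 1) : A - B * z ≠ 0 := by
  refine sub_ne_zero.mpr fun h => hBA.not_ge ?_
  calc ‖A‖ = ‖B‖ * ‖z‖ := by rw [h, norm_mul]
    _ ≤ ‖B‖ := mul_le_of_le_one_right (norm_nonneg B) hz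

theorem stmt_4_general (ζ : ℂ) (A B : ℂ)
    (hA : A = (Real.sqrt ((2 + ‖ζ‖ ^ 2 + Real.sqrt (4 + ‖ζ‖ ^ 4)) / 2) : ℝ))
    (hB : B = (Real.sqrt ((2 + ‖ζ‖ ^ 2 - Real.sqrt (4 + ‖ζ‖ ^ 4)) / 2) : ℝ) *
      ((starRingEnd ℂ) ζ / (‖ζ‖ : ℂ))) :
    (∀ l : ℂ, ‖l‖ = 1 →
      ‖(1 - (starRingEnd ℂ) ζ * l) / (A - B * l)‖ ^ 2 + ‖l / (A - B * l)‖ ^ 2 = 1) ∧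
    (∀ z ∈ ball (0 : ℂ) 1,
      (z / (A - B * z)) / ((1 - (starRingEnd ℂ) ζ * z) / (A - B * z))
        = z / (1 - (starRingEnd ℂ) ζ * z)) := by
  have hnormA : ‖A‖ = coeffA ‖ζ‖ := by
    rw [hA, norm_real]; exact Real.norm_of_nonneg (Real.sqrt_nonneg _)
  have hnormB : ‖B‖ = coeffB ‖ζ‖ := hB ▸ norm_coeffB_mul_conj_div ζ
  have hAB : A * conj B = ζ := hA ▸ hB ▸ coeffA_mul_conj_coeffB ζ
  have hnorm : ‖A‖ ^ 2 + ‖B‖ ^ 2 = 2 + ‖ζ‖ ^ 2 := by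
    rw [hnormA, hnormB, coeffA_sq_add_coeffB_sq]
  have hBA : ‖B‖ < ‖A‖ := hnormA ▸ hnormB ▸ coeffB_lt_coeffA ‖ζ‖
  exact ⟨fun l hl => norm_div_sq_add_norm_div_sq hAB hnorm hl, fun z hz =>
    div_div_div_cancel_right₀ (sub_mul_ne_zero hBA (mem_ball_zero_iff.mp hz).le) _ _⟩

/-- With `A = ((2 + |ζ|² + √(4 + |ζ|⁴))/2)^{1/2}` and
`B = ((2 + |ζ|² − √(4 + |ζ|⁴))/2)^{1/2} · conj ζ/|ζ|` (junk value `B = 0` when `ζ = 0`),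
the functions `b(z) = z/(A − Bz)` and `a(z) = (1 − conj ζ · z)/(A − Bz)` satisfy
`|a|² + |b|² = 1` on the unit circle and `b/a = z/(1 − conj ζ · z)` on the disk. -/
theorem stmt_4 (ζ : ℂ) (hζ : ζ ∈ ball (0 : ℂ) 1) (A B : ℂ)
    (hA : A = (Real.sqrt ((2 + ‖ζ‖ ^ 2 + Real.sqrt (4 + ‖ζ‖ ^ 4)) / 2) : ℝ))
    (hB : B = (Real.sqrt ((2 + ‖ζ‖ ^ 2 - Real.sqrt (4 + ‖ζ‖ ^ 4)) / 2) : ℝ) *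
      ((starRingEnd ℂ) ζ / (‖ζ‖ : ℂ))) :
    (∀ l : ℂ, ‖l‖ = 1 →
      ‖(1 - (starRingEnd ℂ) ζ * l) / (A - B * l)‖ ^ 2 + ‖l / (A - B * l)‖ ^ 2 = 1) ∧
    (∀ z ∈ ball (0 : ℂ) 1,
      (z / (A - B * z)) / ((1 - (starRingEnd ℂ) ζ * z) / (A - B * z))
        = z / (1 - (starRingEnd ℂ) ζ * z)) :=
  stmt_4_general ζ A B hA hB
end

section
/- Let b ∈ H^∞ with ‖b‖_∞ ≤ 1 be non-extreme, with pair (b, a), and suppose H(b) = D_ω with equality of norms for some weight ω ∈ L¹(𝔻) with 0 < ‖ω‖_{L¹} < ∞, where ‖f‖²_{D_ω} = ‖f‖²_{H²} + ∫_𝔻 |f'|² ω dA. Then for f ∈ H(b): f⁺ = 0 iff f is constant; consequently the inner factor of b equals z (up to unimodular constant), i.e. b_i H² = z H². -/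
open Complex Metric MeasureTheory Real Filter

/-- `n`-th Taylor coefficient at `0` of a function holomorphic on the unit disk. -/
noncomputable def hcoeff (f : ℂ → ℂ) (n : ℕ) : ℂ := iteratedDeriv n f 0 / (n.factorial : ℂ)

/-- Membership in the Hardy space `H²` of the unit disk. -/
def MemH2 (f : ℂ → ℂ) : Prop :=
  DifferentiableOn ℂ f (Metric.ball (0 : ℂ) 1) ∧ Summable fun n : ℕ => ‖hcoeff f n‖ ^ 2

/-- The `H²` inner product, conjugate-linear in the first argument. -/
noncomputable def h2inner (f g : ℂ → ℂ) : ℂ :=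
  ∑' n : ℕ, (starRingEnd ℂ) (hcoeff f n) * hcoeff g n

/-- `fplus` is the function `f⁺` associated with `f ∈ H(b)`:
`T_{conj b} f = T_{conj a} f⁺`, expressed by testing inner products against
`bg`, `ag` for all `g ∈ H²`. -/
def IsPlusFn (b a f fplus : ℂ → ℂ) : Prop :=
  ∀ g : ℂ → ℂ, MemH2 g →
    h2inner (fun z => b z * g z) f = h2inner (fun z => a z * g z) fplus

/-! The norm identity gives `‖f⁺‖²_{H²} = π⁻¹ ∫_𝔻 |f'|² ω dA`, so `f⁺ = 0` iff `f'` vanishes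
`ω dA`-a.e. As `ω` is nonzero on a set of positive measure and the zero set of the holomorphic `f'`
is either the whole disk or countable, this happens iff `f` is constant. Finally, `f⁺ = 0` says
exactly that `f ⊥ bH²`, and constants belong to `H(b) = D_ω`. -/

theorem AnalyticOnNhd.eqOn_zero_of_preconnected_of_measure_ne_zero
    {𝕜 E : Type*} [NontriviallyNormedField 𝕜] [SecondCountableTopology 𝕜] [MeasurableSpace 𝕜]
    {μ : Measure 𝕜} [NullSingletonClass μ] [NormedAddCommGroup E] [NormedSpace 𝕜 E]
    {f : 𝕜 → E} {U : Set 𝕜} (hf : AnalyticOnNhd 𝕜 f U) (hU : IsPreconnected U)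
    (hzeros : μ ({z | f z = 0} ∩ U) ≠ 0) : Set.EqOn f 0 U := by
  refine (hf.eqOn_zero_or_eventually_ne_zero_of_preconnected hU).resolve_right fun hne ↦ hzeros ?_
  -- zeros of an analytic function that is not identically zero form a discrete, hence countable, set
  refine Set.Countable.measure_zero ?_ μ
  exact (HereditarilyLindelofSpace.isLindelof _).countable_of_isDiscrete
    (isDiscrete_of_codiscreteWithin hne)

theorem eqOn_deriv_zero_of_eqOn_const {𝕜 F : Type*} [NontriviallyNormedField 𝕜]
    [NormedAddCommGroup F] [NormedSpace 𝕜 F] {f : 𝕜 → F} {U : Set 𝕜} {c : F} (hU : IsOpen U)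
    (hf : ∀ z ∈ U, f z = c) : Set.EqOn (deriv f) 0 U := fun z hz ↦ by
  have hev : f =ᶠ[nhds z] fun _ ↦ c := eventually_of_mem (hU.mem_nhds hz) hf
  rw [hev.deriv_eq, deriv_const, Pi.zero_apply]

theorem measure_setOf_eq_zero_inter_ne_zero_of_setIntegral_mul_eq_zero {α : Type*}
    [MeasurableSpace α] {μ : Measure α} {s : Set α} {F w : α → ℝ} (hs : MeasurableSet s)
    (hF : ∀ x ∈ s, 0 ≤ F x) (hw : ∀ x ∈ s, 0 ≤ w x)
    (hint : IntegrableOn (fun x ↦ F x * w x) s μ) (hwpos : 0 < ∫ x in s, w x ∂μ)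
    (h : ∫ x in s, F x * w x ∂μ = 0) : μ ({x | F x = 0} ∩ s) ≠ 0 := by
  have hFw : ∀ᵐ x ∂μ.restrict s, F x * w x = 0 := by
    refine (integral_eq_zero_iff_of_nonneg_ae ?_ hint).1 h
    exact (ae_restrict_iff' hs).2 (.of_forall fun x hx ↦ mul_nonneg (hF x hx) (hw x hx))
  intro hnull
  have hF_ne : ∀ᵐ x ∂μ.restrict s, F x ≠ 0 := by
    rw [ae_iff, Measure.restrict_apply' hs]
    simpa using hnull
  have hw0 : ∀ᵐ x ∂μ.restrict s, w x = 0 := by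
    filter_upwards [hFw, hF_ne] with x hx hFx
    exact (mul_eq_zero.1 hx).resolve_left hFx
  exact hwpos.ne' (integral_eq_zero_of_ae hw0)

theorem setIntegral_norm_deriv_sq_mul_eq_zero_iff {E : Type*} [NormedAddCommGroup E]
    [NormedSpace ℂ E] [CompleteSpace E] {f : ℂ → E} {ω : ℂ → ℝ} {U : Set ℂ} {z₀ : ℂ}
    (hU : IsOpen U) (hU' : IsPreconnected U) (hz₀ : z₀ ∈ U) (hf : DifferentiableOn ℂ f U)
    (hω : ∀ z ∈ U, 0 ≤ ω z) (hωpos : 0 < ∫ z in U, ω z)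
    (hint : IntegrableOn (fun z ↦ ‖deriv f z‖ ^ 2 * ω z) U) :
    ∫ z in U, ‖deriv f z‖ ^ 2 * ω z = 0 ↔ ∀ z ∈ U, f z = f z₀ := by
  constructor
  · intro h
    have hzeros := measure_setOf_eq_zero_inter_ne_zero_of_setIntegral_mul_eq_zero hU.measurableSet
      (fun z _ ↦ by positivity) hω hint hωpos h
    simp only [ne_eq, OfNat.ofNat_ne_zero, not_false_eq_true, pow_eq_zero_iff,
      norm_eq_zero] at hzeros
    have hderiv := AnalyticOnNhd.eqOn_zero_of_preconnected_of_measure_ne_zero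
      (hf.analyticOnNhd hU).deriv hU' hzeros
    exact fun z hz ↦ hU.is_const_of_deriv_eq_zero hU' hf hderiv hz hz₀
  · intro hconst
    refine setIntegral_eq_zero_of_forall_eq_zero fun z hz ↦ ?_
    simp [eqOn_deriv_zero_of_eqOn_const hU hconst hz]

theorem hcoeff_eq_zero_of_eqOn_zero {f : ℂ → ℂ} (h : ∀ z ∈ ball (0 : ℂ) 1, f z = 0) (n : ℕ) :
    hcoeff f n = 0 := by
  have hev : f =ᶠ[nhds 0] fun _ ↦ 0 := eventually_of_mem (ball_mem_nhds 0 one_pos) h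
  simp [hcoeff, hev.iteratedDeriv_eq]

theorem hcoeff_eq_zero_iff {f : ℂ → ℂ} (hf : DifferentiableOn ℂ f (ball 0 1)) :
    (∀ n, hcoeff f n = 0) ↔ ∀ z ∈ ball (0 : ℂ) 1, f z = 0 := by
  refine ⟨fun h z hz ↦ ?_, hcoeff_eq_zero_of_eqOn_zero⟩
  rw [← Complex.taylorSeries_eq_on_ball' hz hf]
  have hderiv : ∀ n, iteratedDeriv n f 0 = 0 := fun n ↦ by
    simpa [hcoeff, Nat.factorial_ne_zero] using h n
  simp [hderiv]

theorem tsum_norm_hcoeff_sq_eq_zero_iff {f : ℂ → ℂ} (hf : MemH2 f) :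
    ∑' n, ‖hcoeff f n‖ ^ 2 = 0 ↔ ∀ z ∈ ball (0 : ℂ) 1, f z = 0 := by
  rw [← hf.2.hasSum_iff, hasSum_zero_iff_of_nonneg fun n ↦ by positivity, ← hcoeff_eq_zero_iff hf.1]
  simp [funext_iff]

theorem memH2_zero : MemH2 0 :=
  ⟨differentiableOn_const 0, by
    simp [hcoeff_eq_zero_of_eqOn_zero (f := 0) fun _ _ ↦ rfl]⟩

theorem isPlusFn_iff_of_eqOn_zero {b a f fplus : ℂ → ℂ} (h : ∀ z ∈ ball (0 : ℂ) 1, fplus z = 0) :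
    IsPlusFn b a f fplus ↔ ∀ g, MemH2 g → h2inner (fun z ↦ b z * g z) f = 0 := by
  simp [IsPlusFn, h2inner, hcoeff_eq_zero_of_eqOn_zero h]

theorem stmt_18_general (b a : ℂ → ℂ)
    (ω : ℂ → ℝ) (hωnn : ∀ z ∈ ball (0 : ℂ) 1, 0 ≤ ω z)
    (hωpos : 0 < ∫ z in ball (0 : ℂ) 1, ω z)
    (hspace : ∀ f : ℂ → ℂ, MemH2 f →
      ((∃ fplus : ℂ → ℂ, MemH2 fplus ∧ IsPlusFn b a f fplus) ↔
        IntegrableOn (fun z => ‖deriv f z‖ ^ 2 * ω z) (ball (0 : ℂ) 1) volume))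
    (hnorm : ∀ f fplus : ℂ → ℂ, MemH2 f → MemH2 fplus → IsPlusFn b a f fplus →
      (∑' n : ℕ, ‖hcoeff f n‖ ^ 2) + ∑' n : ℕ, ‖hcoeff fplus n‖ ^ 2
        = (∑' n : ℕ, ‖hcoeff f n‖ ^ 2) +
            π⁻¹ * ∫ z in ball (0 : ℂ) 1, ‖deriv f z‖ ^ 2 * ω z) :
    (∀ f fplus : ℂ → ℂ, MemH2 f → MemH2 fplus → IsPlusFn b a f fplus →
      ((∀ z ∈ ball (0 : ℂ) 1, fplus z = 0) ↔ ∀ z ∈ ball (0 : ℂ) 1, f z = f 0)) ∧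
    ∀ f : ℂ → ℂ, MemH2 f →
      ((∀ g : ℂ → ℂ, MemH2 g → h2inner (fun z => b z * g z) f = 0) ↔
        ∀ z ∈ ball (0 : ℂ) 1, f z = f 0) := by
  have plus_eq_zero_iff : ∀ f fplus : ℂ → ℂ, MemH2 f → MemH2 fplus → IsPlusFn b a f fplus →
      ((∀ z ∈ ball (0 : ℂ) 1, fplus z = 0) ↔ ∀ z ∈ ball (0 : ℂ) 1, f z = f 0) := by
    intro f fplus hf hfp hplus
    rw [← tsum_norm_hcoeff_sq_eq_zero_iff hfp, add_left_cancel (hnorm f fplus hf hfp hplus),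
      mul_eq_zero, or_iff_right (inv_ne_zero pi_ne_zero)]
    exact setIntegral_norm_deriv_sq_mul_eq_zero_iff isOpen_ball (convex_ball 0 1).isPreconnected
      (mem_ball_self one_pos) hf.1 hωnn hωpos ((hspace f hf).1 ⟨fplus, hfp, hplus⟩)
  refine ⟨plus_eq_zero_iff, fun f hf ↦ ⟨fun horth ↦ ?_, fun hconst ↦ ?_⟩⟩
  · have hplus : IsPlusFn b a f 0 := (isPlusFn_iff_of_eqOn_zero fun _ _ ↦ rfl).2 horth
    exact (plus_eq_zero_iff f 0 hf memH2_zero hplus).1 fun _ _ ↦ rfl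
  · have hint : IntegrableOn (fun z ↦ ‖deriv f z‖ ^ 2 * ω z) (ball (0 : ℂ) 1) := by
      refine integrableOn_zero.congr_fun (fun z hz ↦ ?_) measurableSet_ball
      simp [eqOn_deriv_zero_of_eqOn_const isOpen_ball hconst hz]
    obtain ⟨fplus, hfp, hplus⟩ := (hspace f hf).2 hint
    exact (isPlusFn_iff_of_eqOn_zero ((plus_eq_zero_iff f fplus hf hfp hplus).2 hconst)).1 hplus

/-- Suppose `b` (non-extreme, with pair `(b,a)`: `a` outer — i.e. `aH²` dense in `H²` —
with `a(0) > 0` and `|a|² + |b|² = 1` a.e. on `𝕋` via radial limits) satisfies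
`H(b) = D_ω` with equality of norms, for a weight `ω ∈ L¹(𝔻)` with `0 < ‖ω‖_{L¹} < ∞`,
i.e. `f ∈ H(b)` iff `∫_𝔻 |f′|² ω dA < ∞`, and then
`‖f‖²_{H²} + ‖f⁺‖²_{H²} = ‖f‖²_{H²} + ∫_𝔻 |f′|² ω dA`. Then for `f ∈ H(b)`: `f⁺ = 0` iff
`f` is constant; consequently the inner factor of `b` is `z`, i.e. `b_i H² = zH²`,
expressed as: `f ⊥ bH²` iff `f` is constant.  -/
theorem stmt_18 (b a : ℂ → ℂ)
    (hbhol : DifferentiableOn ℂ b (ball (0 : ℂ) 1))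
    (hbnorm : ∀ z ∈ ball (0 : ℂ) 1, ‖b z‖ ≤ 1)
    (hahol : DifferentiableOn ℂ a (ball (0 : ℂ) 1))
    (hanorm : ∀ z ∈ ball (0 : ℂ) 1, ‖a z‖ ≤ 1)
    (ha0 : 0 < (a 0).re ∧ (a 0).im = 0)
    (hpair : ∀ᵐ θ ∂(volume.restrict (Set.Ioc (0 : ℝ) (2 * π))),
      Tendsto (fun r : ℝ =>
          ‖a ((r : ℂ) * circleMap 0 1 θ)‖ ^ 2 + ‖b ((r : ℂ) * circleMap 0 1 θ)‖ ^ 2)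
        (nhdsWithin 1 (Set.Iio 1)) (nhds 1))
    (houter : ∀ f : ℂ → ℂ, MemH2 f → ∀ ε : ℝ, 0 < ε → ∃ h : ℂ → ℂ, MemH2 h ∧
      MemH2 (fun z => f z - a z * h z) ∧
      (∑' n : ℕ, ‖hcoeff (fun z => f z - a z * h z) n‖ ^ 2) < ε)
    (ω : ℂ → ℝ) (hωnn : ∀ z ∈ ball (0 : ℂ) 1, 0 ≤ ω z)
    (hωint : IntegrableOn ω (ball (0 : ℂ) 1) volume)
    (hωpos : 0 < ∫ z in ball (0 : ℂ) 1, ω z)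
    (hspace : ∀ f : ℂ → ℂ, MemH2 f →
      ((∃ fplus : ℂ → ℂ, MemH2 fplus ∧ IsPlusFn b a f fplus) ↔
        IntegrableOn (fun z => ‖deriv f z‖ ^ 2 * ω z) (ball (0 : ℂ) 1) volume))
    (hnorm : ∀ f fplus : ℂ → ℂ, MemH2 f → MemH2 fplus → IsPlusFn b a f fplus →
      (∑' n : ℕ, ‖hcoeff f n‖ ^ 2) + ∑' n : ℕ, ‖hcoeff fplus n‖ ^ 2
        = (∑' n : ℕ, ‖hcoeff f n‖ ^ 2) +
            π⁻¹ * ∫ z in ball (0 : ℂ) 1, ‖deriv f z‖ ^ 2 * ω z) :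
    (∀ f fplus : ℂ → ℂ, MemH2 f → MemH2 fplus → IsPlusFn b a f fplus →
      ((∀ z ∈ ball (0 : ℂ) 1, fplus z = 0) ↔ ∀ z ∈ ball (0 : ℂ) 1, f z = f 0)) ∧
    ∀ f : ℂ → ℂ, MemH2 f →
      ((∀ g : ℂ → ℂ, MemH2 g → h2inner (fun z => b z * g z) f = 0) ↔
        ∀ z ∈ ball (0 : ℂ) 1, f z = f 0) :=
  stmt_18_general b a ω hωnn hωpos hspace hnorm
end
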